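/- Let C be a d-clutter on a finite vertex set V. If the simplicial complex ⟨C^∨⟩ is vertex decomposable, then C is chordal. -/

import Mathlib

/-!
Induct on the vertex decomposition of `Δ = ⟨C^∨⟩`. If `Δ` is a simplex, `C̄` is a single
`(d+1)`-set `F₀` and `C` is the complete clutter minus `F₀`. If `v ∈ V` is a shedding vertex, then
on `V \ {v}` we have `link_Δ(v) = ⟨(C − v)^∨⟩` and `Δ − v = ⟨(link_C v)^∨⟩`, so `C − v` and
`link_C v` are chordal by induction; moreover shedding forces `C` to contain every `(d+1)`-set
`F ∌ v` whose cone `v * ∂F` lies in `C`. Under that condition a simplicial maximal subcircuit `e` of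
`link_C v` yields the simplicial maximal subcircuit `e ∪ {v}` of `C`, and deleting it deletes `e`
from the link without touching `C − v`; so an elimination for `link_C v` followed by one for
`C − v` eliminates `C`. The same gluing at a vertex of `F₀` shows that complete clutters, with or
without one circuit, are chordal.
-/

namespace ClutterPaper

variable {α : Type*} [DecidableEq α]

/-- `C` is a uniform clutter on vertex set `V` all of whose circuits have cardinality `c`
(i.e. a `(c-1)`-dimensional uniform clutter). -/
def IsClutter (V : Finset α) (c : ℕ) (C : Finset (Finset α)) : Prop :=
  ∀ F ∈ C, F ⊆ V ∧ F.card = c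

/-- The complement clutter `C̄`: all `c`-subsets of `V` not in `C`. -/
def compClutter (V : Finset α) (c : ℕ) (C : Finset (Finset α)) : Finset (Finset α) :=
  V.powersetCard c \ C

/-- `C^∨ = { V \ F | F ∈ C̄ }`. -/
def clutterDual (V : Finset α) (c : ℕ) (C : Finset (Finset α)) : Finset (Finset α) :=
  (compClutter V c C).image fun F => V \ F

/-- `A` is a clique of the clutter `C` (with circuit cardinality `c`) on vertex set `V`:
all `c`-subsets of `A` are circuits. -/
def IsClique (V : Finset α) (c : ℕ) (C : Finset (Finset α)) (A : Finset α) : Prop :=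
  A ⊆ V ∧ ∀ F ⊆ A, F.card = c → F ∈ C

/-- The closed neighborhood `N_C[e] = e ∪ { v ∈ V | e ∪ {v} ∈ C }`. -/
def closedNbhd (V : Finset α) (C : Finset (Finset α)) (e : Finset α) : Finset α :=
  e ∪ V.filter fun v => insert v e ∈ C

/-- `e` is a maximal subcircuit of the clutter `C` with circuit cardinality `c`:
`e` has cardinality `c - 1` and is contained in some circuit. -/
def IsMS (c : ℕ) (C : Finset (Finset α)) (e : Finset α) : Prop :=
  e.card + 1 = c ∧ ∃ F ∈ C, e ⊆ F

/-- `e` is a simplicial maximal subcircuit: a maximal subcircuit whose closed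
neighborhood is a clique. -/
def IsSMS (V : Finset α) (c : ℕ) (C : Finset (Finset α)) (e : Finset α) : Prop :=
  IsMS c C e ∧ IsClique V c C (closedNbhd V C e)

/-- `e` is a free maximal subcircuit: contained in exactly one circuit. -/
def IsFreeMS (c : ℕ) (C : Finset (Finset α)) (e : Finset α) : Prop :=
  e.card + 1 = c ∧ ∃! F, F ∈ C ∧ e ⊆ F

/-- Deletion `C − e` of a maximal subcircuit: the circuits not containing `e`. -/
def delMS (C : Finset (Finset α)) (e : Finset α) : Finset (Finset α) :=
  C.filter fun F => ¬ e ⊆ F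

/-- Deletion of a vertex: circuits (or faces) not containing `v`. -/
def delVert (C : Finset (Finset α)) (v : α) : Finset (Finset α) :=
  C.filter fun F => v ∉ F

/-- Chordality of a uniform clutter (circuit cardinality `c`) on `V`: there is a sequence of
deletions of simplicial maximal subcircuits ending in the clutter with no circuits. -/
inductive Chordal (V : Finset α) (c : ℕ) : Finset (Finset α) → Prop
  | empty : Chordal V c ∅
  | step {C : Finset (Finset α)} (e : Finset α) :
      IsSMS V c C e → Chordal V c (delMS C e) → Chordal V c C

/-- The ascent `C⁺` of a clutter with circuit cardinality `c`: all `(c+1)`-subsets of `V`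
that are cliques of `C`. -/
def ascent (V : Finset α) (c : ℕ) (C : Finset (Finset α)) : Finset (Finset α) :=
  (V.powersetCard (c + 1)).filter fun A => A.powersetCard c ⊆ C

/-- The simplicial complex `⟨D⟩` generated by a clutter `D`: all subsets of its elements. -/
def complexOf (D : Finset (Finset α)) : Finset (Finset α) :=
  D.biUnion Finset.powerset

/-- A family of finsets is a simplicial complex if it is downward closed. -/
def IsComplex (Δ : Finset (Finset α)) : Prop :=
  ∀ F ∈ Δ, ∀ G ⊆ F, G ∈ Δ

/-- The facets (maximal faces) of a simplicial complex. -/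
def facets (Δ : Finset (Finset α)) : Finset (Finset α) :=
  Δ.filter fun F => ∀ G ∈ Δ, F ⊆ G → F = G

/-- `link_Δ(v) = { F \ {v} | v ∈ F ∈ Δ }`. -/
def link (Δ : Finset (Finset α)) (v : α) : Finset (Finset α) :=
  (Δ.filter fun F => v ∈ F).image fun F => F.erase v

/-- `v` is a shedding vertex of `Δ`: no face of `link_Δ(v)` is a facet of `Δ − v`. -/
def Shedding (Δ : Finset (Finset α)) (v : α) : Prop :=
  ∀ F ∈ link Δ v, F ∉ facets (delVert Δ v)

/-- Alexander dual of a simplicial complex on vertex set `V`: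
`Δ^∨ = { V \ F | F ⊆ V, F ∉ Δ }`. -/
def alexDual (V : Finset α) (Δ : Finset (Finset α)) : Finset (Finset α) :=
  (V.powerset.filter fun F => F ∉ Δ).image fun F => V \ F

/-- `Δ` is pure with all facets of cardinality `c` (dimension `c - 1`), and nonempty. -/
def PureDim (Δ : Finset (Finset α)) (c : ℕ) : Prop :=
  Δ.Nonempty ∧ ∀ F ∈ facets Δ, F.card = c

/-- Vertex decomposability of a simplicial complex. -/
inductive VDecomp : Finset (Finset α) → Prop
  | simplex {Δ : Finset (Finset α)} : (facets Δ).card = 1 → VDecomp Δ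
  | shed {Δ : Finset (Finset α)} (v : α) : Shedding Δ v →
      VDecomp (link Δ v) → VDecomp (delVert Δ v) → VDecomp Δ

/-- The vertex set of a clutter (or of the complex it generates). -/
def vertexSet (Ω : Finset (Finset α)) : Finset α :=
  Ω.biUnion id

/-- `Ω` (given by its set of facets, each of cardinality `d+1`) is a `d`-cycle:
nonempty, pure of dimension `d`, `d`-path connected, and every `(d-1)`-dimensional
face lies in an even number of `d`-faces. -/
def IsCycle (d : ℕ) (Ω : Finset (Finset α)) : Prop :=
  Ω.Nonempty ∧ (∀ F ∈ Ω, F.card = d + 1) ∧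
    (∀ F ∈ Ω, ∀ G ∈ Ω,
      Relation.ReflTransGen (fun A B => A ∈ Ω ∧ B ∈ Ω ∧ (A ∩ B).card = d) F G) ∧
    ∀ e : Finset α, e.card = d → Even ((Ω.filter fun F => e ⊆ F).card)

/-- A face-minimal `d`-cycle: no `d`-cycle has a strictly smaller set of `d`-faces. -/
def FaceMinimalCycle (d : ℕ) (Ω : Finset (Finset α)) : Prop :=
  IsCycle d Ω ∧ ∀ Ω' : Finset (Finset α), IsCycle d Ω' → Ω' ⊆ Ω → Ω' = Ω

/-- `Ω` is `d`-complete: it contains every `(d+1)`-subset of its vertex set. -/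
def DComplete (d : ℕ) (Ω : Finset (Finset α)) : Prop :=
  ∀ F ⊆ vertexSet Ω, F.card = d + 1 → F ∈ Ω

/-- The complex `⟨C⟩` generated by the `d`-dimensional clutter `C` is `d`-chorded. -/
def Chorded (d : ℕ) (C : Finset (Finset α)) : Prop :=
  ∀ Ω : Finset (Finset α), FaceMinimalCycle d Ω → Ω ⊆ C → ¬ DComplete d Ω →
    ∃ (k : ℕ) (Ωs : Fin k → Finset (Finset α)), 2 ≤ k ∧
      (∀ i, IsCycle d (Ωs i) ∧ Ωs i ⊆ C) ∧
      (∀ F ∈ Ω, ∃ i, F ∈ Ωs i) ∧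
      (∀ F ∈ Ω, Odd ((Finset.univ.filter fun i => F ∈ Ωs i).card)) ∧
      (∀ F : Finset α, (∃ i, F ∈ Ωs i) → F ∉ Ω →
        Even ((Finset.univ.filter fun i => F ∈ Ωs i).card)) ∧
      ∀ i, vertexSet (Ωs i) ⊂ vertexSet Ω

/-- The circuits of `D` admit an admissible order. -/
def HasAdmissibleOrder (D : Finset (Finset α)) : Prop :=
  ∃ (t : ℕ) (F : Fin t → Finset α), Function.Injective F ∧
    (∀ G, G ∈ D ↔ ∃ i, F i = G) ∧
    ∀ i j : Fin t, j < i →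
      ∃ l ∈ F j \ F i, ∃ k : Fin t, k < i ∧ F k \ F i = {l}

/-- Contraction `D/v` of a (not necessarily uniform) clutter: the minimal sets of
`{ e \ {v} | e ∈ D }`. -/
def contractAux (D : Finset (Finset α)) (v : α) : Finset (Finset α) :=
  D.image fun e => e.erase v

def contract (D : Finset (Finset α)) (v : α) : Finset (Finset α) :=
  (contractAux D v).filter fun e => ∀ f ∈ contractAux D v, f ⊆ e → f = e

/-- `D` has a simplicial vertex (trivially true if `D` has no vertices). -/
def HasSimpVertex (D : Finset (Finset α)) : Prop :=
  vertexSet D = ∅ ∨ ∃ v ∈ vertexSet D, ∀ e₁ ∈ D, ∀ e₂ ∈ D, v ∈ e₁ → v ∈ e₂ →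
    ∃ e₃ ∈ D, e₃ ⊆ (e₁ ∪ e₂).erase v

/-- `D` is W-chordal: every clutter obtained from `D` by a sequence of vertex deletions
and contractions has a simplicial vertex. -/
def WChordal (D : Finset (Finset α)) : Prop :=
  ∀ D' : Finset (Finset α),
    Relation.ReflTransGen (fun X Y => ∃ v, Y = delVert X v ∨ Y = contract X v) D D' →
    HasSimpVertex D'

open Finset

lemma mem_complexOf {D : Finset (Finset α)} {G : Finset α} :
    G ∈ complexOf D ↔ ∃ F ∈ D, G ⊆ F := by
  simp [complexOf]

lemma mem_complexOf_clutterDual {V : Finset α} {c : ℕ} {C : Finset (Finset α)} {G : Finset α} :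
    G ∈ complexOf (clutterDual V c C) ↔ ∃ F ⊆ V, F.card = c ∧ F ∉ C ∧ G ⊆ V \ F := by
  simp [mem_complexOf, clutterDual, compClutter, and_assoc]

lemma mem_link {Δ : Finset (Finset α)} {v : α} {G : Finset α} :
    G ∈ link Δ v ↔ v ∉ G ∧ insert v G ∈ Δ := by
  simp only [link, mem_image, mem_filter]
  constructor
  · rintro ⟨F, ⟨hF, hvF⟩, rfl⟩
    simpa [insert_erase hvF] using hF
  · rintro ⟨hvG, hG⟩
    exact ⟨insert v G, ⟨hG, mem_insert_self v G⟩, erase_insert hvG⟩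

lemma mem_delVert {C : Finset (Finset α)} {v : α} {F : Finset α} :
    F ∈ delVert C v ↔ F ∈ C ∧ v ∉ F :=
  mem_filter

lemma erase_sdiff_eq_sdiff_insert (V F : Finset α) (v : α) : V.erase v \ F = V \ insert v F := by
  rw [sdiff_insert, erase_sdiff_comm]

lemma exists_mem_facets_superset {Δ : Finset (Finset α)} {F : Finset α} (hF : F ∈ Δ) :
    ∃ H ∈ facets Δ, F ⊆ H := by
  obtain ⟨H, hFH, hH, hmax⟩ := Δ.finite_toSet.exists_le_maximal (mem_coe.2 hF)
  exact ⟨H, mem_filter.2 ⟨hH, fun G hG hHG => hHG.antisymm (hmax hG hHG)⟩, hFH⟩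

omit [DecidableEq α] in
lemma isClutter_powersetCard (V : Finset α) (c : ℕ) : IsClutter V c (V.powersetCard c) :=
  fun _ hF => mem_powersetCard.1 hF

omit [DecidableEq α] in
lemma IsClutter.subset {V : Finset α} {c : ℕ} {C C' : Finset (Finset α)} (hC : IsClutter V c C)
    (h : C' ⊆ C) : IsClutter V c C' :=
  fun F hF => hC F (h hF)

lemma IsClutter.delVert {V : Finset α} {c : ℕ} {C : Finset (Finset α)} (hC : IsClutter V c C)
    (v : α) : IsClutter (V.erase v) c (delVert C v) := by
  intro F hF
  obtain ⟨hFC, hvF⟩ := mem_delVert.1 hF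
  exact ⟨subset_erase.2 ⟨(hC F hFC).1, hvF⟩, (hC F hFC).2⟩

lemma IsClutter.link {V : Finset α} {c : ℕ} {C : Finset (Finset α)} (hC : IsClutter V (c + 1) C)
    (v : α) : IsClutter (V.erase v) c (link C v) := by
  intro G hG
  obtain ⟨hvG, hG⟩ := mem_link.1 hG
  obtain ⟨hGV, hcard⟩ := hC _ hG
  refine ⟨subset_erase.2 ⟨(subset_insert v G).trans hGV, hvG⟩, ?_⟩
  rwa [card_insert_of_notMem hvG, Nat.add_right_cancel_iff] at hcard

lemma Chordal.mono {W V : Finset α} {c : ℕ} {C : Finset (Finset α)} (h : Chordal W c C)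
    (hWV : W ⊆ V) (hC : ∀ F ∈ C, F ⊆ W) : Chordal V c C := by
  induction h with
  | empty => exact .empty
  | @step C e he _ ih =>
    have hN : closedNbhd V C e = closedNbhd W C e := by
      refine congrArg (e ∪ ·) (Finset.ext fun w => ?_)
      simp only [mem_filter]
      exact ⟨fun ⟨_, hw⟩ => ⟨hC _ hw (mem_insert_self w e), hw⟩, fun ⟨hw, h⟩ => ⟨hWV hw, h⟩⟩
    exact .step e ⟨he.1, hN ▸ ⟨he.2.1.trans hWV, he.2.2⟩⟩
      (ih fun F hF => hC F (mem_filter.1 hF).1)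

lemma chordal_of_isClutter_one {V : Finset α} {C : Finset (Finset α)} (hC : IsClutter V 1 C) :
    Chordal V 1 C := by
  obtain rfl | ⟨F, hF⟩ := C.eq_empty_or_nonempty
  · exact .empty
  have hdel : delMS C ∅ = ∅ := filter_false_of_mem fun F _ h => h (empty_subset F)
  refine .step ∅ ⟨⟨rfl, F, hF, empty_subset F⟩, ?_, fun B hB hcard => ?_⟩ (hdel ▸ .empty)
  · simp [closedNbhd]
  · obtain ⟨w, rfl⟩ := card_eq_one.1 hcard
    have hw := hB (mem_singleton_self w)
    simp only [closedNbhd, empty_union, mem_filter] at hw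
    simpa using hw.2

def ConeClosed (V : Finset α) (c : ℕ) (C : Finset (Finset α)) (v : α) : Prop :=
  ∀ F ⊆ V, F.card = c → v ∉ F → (∀ x ∈ F, insert v (F.erase x) ∈ C) → F ∈ C

lemma ConeClosed.delMS {V : Finset α} {c : ℕ} {C : Finset (Finset α)} {v : α}
    (h : ConeClosed V c C v) (e : Finset α) : ConeClosed V c (delMS C (insert v e)) v :=
  fun F hFV hcard hvF hcone => mem_filter.2
    ⟨h F hFV hcard hvF fun x hx => (mem_filter.1 (hcone x hx)).1,
      fun hsub => hvF (hsub (mem_insert_self v e))⟩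

lemma closedNbhd_insert {V : Finset α} {C : Finset (Finset α)} {v : α} {e : Finset α}
    (hve : v ∉ e) :
    closedNbhd V C (insert v e) = insert v (closedNbhd (V.erase v) (link C v) e) := by
  ext w
  by_cases hwv : w = v
  · simp [closedNbhd, hwv]
  by_cases hwe : w ∈ e
  · simp [closedNbhd, hwe]
  have hlink : insert w e ∈ link C v ↔ insert w (insert v e) ∈ C := by
    rw [mem_link, insert_comm]
    simp [hve, Ne.symm hwv]
  simp [closedNbhd, hwv, hwe, hlink]

lemma IsClique.insert_of_link {V : Finset α} {c : ℕ} {C : Finset (Finset α)} {v : α}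
    {A : Finset α} (hA : IsClique (V.erase v) c (link C v) A) (hv : v ∈ V)
    (hcone : ConeClosed V (c + 1) C v) : IsClique V (c + 1) C (insert v A) := by
  have hvA : v ∉ A := fun h => (mem_erase.1 (hA.1 h)).1 rfl
  refine ⟨insert_subset hv (hA.1.trans (erase_subset v V)), fun B hB hcard => ?_⟩
  by_cases hvB : v ∈ B
  · have hBA : B.erase v ⊆ A := by
      rw [← erase_insert hvA]
      exact erase_subset_erase v hB
    have := (mem_link.1 (hA.2 _ hBA (by rw [card_erase_of_mem hvB, hcard]; rfl))).2
    rwa [insert_erase hvB] at this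
  · have hBA : B ⊆ A := (subset_insert_iff_of_notMem hvB).1 hB
    refine hcone B (hBA.trans (hA.1.trans (erase_subset v V))) hcard hvB fun x hx => ?_
    exact (mem_link.1 (hA.2 _ ((erase_subset x B).trans hBA)
      (by rw [card_erase_of_mem hx, hcard]; rfl))).2

lemma IsSMS.insert_of_link {V : Finset α} {c : ℕ} {C : Finset (Finset α)} {v : α}
    {e : Finset α} (he : IsSMS (V.erase v) c (link C v) e) (hv : v ∈ V)
    (hcone : ConeClosed V (c + 1) C v) : v ∉ e ∧ IsSMS V (c + 1) C (insert v e) := by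
  obtain ⟨⟨hcard, G, hG, heG⟩, hclique⟩ := he
  obtain ⟨hvG, hG⟩ := mem_link.1 hG
  have hve : v ∉ e := fun h => hvG (heG h)
  refine ⟨hve, ⟨?_, insert v G, hG, insert_subset_insert v heG⟩, ?_⟩
  · rw [card_insert_of_notMem hve, hcard]
  · rw [closedNbhd_insert hve]
    exact hclique.insert_of_link hv hcone

lemma link_delMS_insert {C : Finset (Finset α)} {v : α} {e : Finset α} (hve : v ∉ e) :
    link (delMS C (insert v e)) v = delMS (link C v) e := by
  ext G
  simp only [mem_link, delMS, mem_filter]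
  constructor
  · rintro ⟨hvG, hG, hsub⟩
    exact ⟨⟨hvG, hG⟩, fun h => hsub (insert_subset_insert v h)⟩
  · rintro ⟨⟨hvG, hG⟩, hsub⟩
    exact ⟨hvG, hG, fun h => hsub ((subset_insert_iff_of_notMem hve).1
      ((subset_insert v e).trans h))⟩

lemma delVert_delMS_insert (C : Finset (Finset α)) (v : α) (e : Finset α) :
    delVert (delMS C (insert v e)) v = delVert C v := by
  ext F
  simp only [delVert, delMS, mem_filter]
  exact ⟨fun ⟨⟨hF, _⟩, hvF⟩ => ⟨hF, hvF⟩,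
    fun ⟨hF, hvF⟩ => ⟨⟨hF, fun h => hvF (h (mem_insert_self v e))⟩, hvF⟩⟩

theorem chordal_of_link_of_delVert {V : Finset α} {c : ℕ} {C : Finset (Finset α)} {v : α}
    (hv : v ∈ V) (hC : IsClutter V (c + 1) C) (hcone : ConeClosed V (c + 1) C v)
    (hlink : Chordal (V.erase v) c (link C v))
    (hdel : Chordal (V.erase v) (c + 1) (delVert C v)) : Chordal V (c + 1) C := by
  generalize hD : link C v = D at hlink
  induction hlink generalizing C with
  | empty =>
    have hvC : ∀ F ∈ C, v ∉ F := fun F hF hvF =>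
      notMem_empty _ (hD ▸ mem_link.2 ⟨notMem_erase v F, by rwa [insert_erase hvF]⟩)
    rw [delVert, filter_true_of_mem hvC] at hdel
    exact hdel.mono (erase_subset v V) fun F hF => subset_erase.2 ⟨(hC F hF).1, hvC F hF⟩
  | step e he _ ih =>
    subst hD
    obtain ⟨hve, he⟩ := he.insert_of_link hv hcone
    refine .step _ he (ih (hC.subset (filter_subset _ C)) (hcone.delMS e) ?_
      (link_delMS_insert hve))
    rwa [delVert_delMS_insert]

lemma link_powersetCard {V : Finset α} {v : α} (hv : v ∈ V) (c : ℕ) :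
    link (V.powersetCard (c + 1)) v = (V.erase v).powersetCard c := by
  ext G
  simp only [mem_link, mem_powersetCard, subset_erase]
  constructor
  · rintro ⟨hvG, hGV, hcard⟩
    exact ⟨⟨(subset_insert v G).trans hGV, hvG⟩, by simpa [hvG] using hcard⟩
  · rintro ⟨⟨hGV, hvG⟩, hcard⟩
    exact ⟨hvG, insert_subset hv hGV, by simp [hvG, hcard]⟩

lemma delVert_powersetCard (V : Finset α) (v : α) (c : ℕ) :
    delVert (V.powersetCard c) v = (V.erase v).powersetCard c := by
  ext F
  simp only [mem_delVert, mem_powersetCard, subset_erase]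
  tauto

lemma link_erase {C : Finset (Finset α)} {v : α} {F₀ : Finset α} (hv : v ∈ F₀) :
    link (C.erase F₀) v = (link C v).erase (F₀.erase v) := by
  ext G
  simp only [mem_link, mem_erase]
  constructor
  · rintro ⟨hvG, hne, hG⟩
    exact ⟨fun h => hne (by rw [h, insert_erase hv]), hvG, hG⟩
  · rintro ⟨hne, hvG, hG⟩
    exact ⟨hvG, fun h => hne (by rw [← h, erase_insert hvG]), hG⟩

lemma delVert_erase {C : Finset (Finset α)} {v : α} {F₀ : Finset α} (hv : v ∈ F₀) :
    delVert (C.erase F₀) v = delVert C v := by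
  ext F
  simp only [mem_delVert, mem_erase]
  exact ⟨fun ⟨⟨_, hF⟩, hvF⟩ => ⟨hF, hvF⟩, fun ⟨hF, hvF⟩ => ⟨⟨fun h => hvF (h ▸ hv), hF⟩, hvF⟩⟩

theorem chordal_powersetCard (V : Finset α) (c : ℕ) :
    Chordal V (c + 1) (V.powersetCard (c + 1)) := by
  induction V using Finset.strongInduction generalizing c with
  | H V ih =>
  obtain ⟨v, hv⟩ | rfl := V.eq_empty_or_nonempty.symm
  · cases c with
    | zero => exact chordal_of_isClutter_one (isClutter_powersetCard V 1)
    | succ c =>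
      refine chordal_of_link_of_delVert hv (isClutter_powersetCard V _)
        (fun F hFV hcard _ _ => mem_powersetCard.2 ⟨hFV, hcard⟩) ?_ ?_
      · rw [link_powersetCard hv]
        exact ih _ (erase_ssubset hv) c
      · rw [delVert_powersetCard]
        exact ih _ (erase_ssubset hv) (c + 1)
  · rw [powersetCard_eq_empty.2 (Nat.zero_lt_succ c)]
    exact .empty

theorem chordal_powersetCard_erase {V F₀ : Finset α} {c : ℕ}
    (hF₀ : F₀ ∈ V.powersetCard (c + 1)) :
    Chordal V (c + 1) ((V.powersetCard (c + 1)).erase F₀) := by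
  induction c generalizing V F₀ with
  | zero => exact chordal_of_isClutter_one ((isClutter_powersetCard V 1).subset (erase_subset _ _))
  | succ c ih =>
    obtain ⟨hF₀V, hcard⟩ := mem_powersetCard.1 hF₀
    obtain ⟨v, hv⟩ : F₀.Nonempty := card_pos.1 (by omega)
    refine chordal_of_link_of_delVert (hF₀V hv)
      ((isClutter_powersetCard V _).subset (erase_subset _ _)) ?_ ?_ ?_
    · intro F hFV hcard hvF _
      exact mem_erase.2 ⟨fun h => hvF (h ▸ hv), mem_powersetCard.2 ⟨hFV, hcard⟩⟩
    · rw [link_erase hv, link_powersetCard (hF₀V hv)]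
      refine ih (mem_powersetCard.2 ⟨erase_subset_erase v hF₀V, ?_⟩)
      rw [card_erase_of_mem hv, hcard]; rfl
    · rw [delVert_erase hv, delVert_powersetCard]
      exact chordal_powersetCard _ _

lemma facets_complexOf {D : Finset (Finset α)} (hD : IsAntichain (· ⊆ ·) (D : Set (Finset α))) :
    facets (complexOf D) = D := by
  ext F
  simp only [facets, mem_filter, mem_complexOf]
  constructor
  · rintro ⟨⟨G, hG, hFG⟩, hmax⟩
    rwa [hmax G ⟨G, hG, subset_refl G⟩ hFG]
  · intro hF
    refine ⟨⟨F, hF, subset_refl F⟩, fun G ⟨H, hH, hGH⟩ hFG => ?_⟩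
    exact hFG.antisymm (hD.eq hF hH (hFG.trans hGH) ▸ hGH)

lemma exists_eq_powersetCard_erase {V : Finset α} {c : ℕ} {C : Finset (Finset α)}
    (hC : IsClutter V c C) (h : (facets (complexOf (clutterDual V c C))).card = 1) :
    ∃ F₀ ∈ V.powersetCard c, C = (V.powersetCard c).erase F₀ := by
  have hsized : (clutterDual V c C : Set (Finset α)).Sized (V.card - c) := by
    intro G hG
    obtain ⟨F, hF, rfl⟩ := mem_image.1 (mem_coe.1 hG)
    rw [card_sdiff_of_subset (mem_powersetCard.1 (mem_sdiff.1 hF).1).1,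
      (mem_powersetCard.1 (mem_sdiff.1 hF).1).2]
  have hinj : Set.InjOn (V \ ·) (compClutter V c C : Set (Finset α)) := by
    intro F hF F' hF' hFF'
    rw [← Finset.sdiff_sdiff_eq_self (mem_powersetCard.1 (mem_sdiff.1 hF).1).1,
      ← Finset.sdiff_sdiff_eq_self (mem_powersetCard.1 (mem_sdiff.1 hF').1).1]
    exact congrArg (V \ ·) hFF'
  rw [facets_complexOf hsized.isAntichain, clutterDual, card_image_of_injOn hinj] at h
  obtain ⟨F₀, hF₀⟩ := card_eq_one.1 h
  refine ⟨F₀, (mem_sdiff.1 (hF₀ ▸ mem_singleton_self F₀ : F₀ ∈ compClutter V c C)).1, ?_⟩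
  have hCV : C ⊆ V.powersetCard c := fun F hF => mem_powersetCard.2 (hC F hF)
  rw [← sdiff_singleton_eq_erase, ← hF₀, compClutter, Finset.sdiff_sdiff_eq_self hCV]

lemma delVert_complexOf_clutterDual_of_notMem {V : Finset α} {c : ℕ} {C : Finset (Finset α)}
    {v : α} (hv : v ∉ V) :
    delVert (complexOf (clutterDual V c C)) v = complexOf (clutterDual V c C) := by
  refine filter_true_of_mem fun G hG hvG => hv ?_
  obtain ⟨F, -, -, -, hGF⟩ := mem_complexOf_clutterDual.1 hG
  exact (mem_sdiff.1 (hGF hvG)).1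

lemma link_complexOf_clutterDual {V : Finset α} {c : ℕ} {C : Finset (Finset α)} {v : α}
    (hv : v ∈ V) :
    link (complexOf (clutterDual V c C)) v =
      complexOf (clutterDual (V.erase v) c (delVert C v)) := by
  ext G
  simp only [mem_link, mem_complexOf_clutterDual, mem_delVert, erase_sdiff_comm, subset_erase,
    insert_subset_iff, mem_sdiff]
  constructor
  · rintro ⟨hvG, F, hFV, hcard, hFC, ⟨-, hvF⟩, hGF⟩
    exact ⟨F, ⟨hFV, hvF⟩, hcard, fun h => hFC h.1, hGF, hvG⟩
  · rintro ⟨F, ⟨hFV, hvF⟩, hcard, hFC, hGF, hvG⟩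
    exact ⟨hvG, F, hFV, hcard, fun h => hFC ⟨h, hvF⟩, ⟨hv, hvF⟩, hGF⟩

lemma delVert_complexOf_clutterDual {V : Finset α} {c : ℕ} {C : Finset (Finset α)} {v : α}
    (hv : v ∈ V) (hshed : Shedding (complexOf (clutterDual V (c + 1) C)) v) :
    delVert (complexOf (clutterDual V (c + 1) C)) v =
      complexOf (clutterDual (V.erase v) c (link C v)) := by
  ext G
  rw [mem_complexOf_clutterDual]
  constructor
  · intro hG
    obtain ⟨H, hH, hGH⟩ := exists_mem_facets_superset hG
    obtain ⟨hHΔ, hvH⟩ := mem_delVert.1 (mem_filter.1 hH).1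
    obtain ⟨F, hFV, hcard, hFC, hHF⟩ := mem_complexOf_clutterDual.1 hHΔ
    -- otherwise `H` would be a face of the link that is a facet of the deletion
    have hvF : v ∈ F := by
      by_contra hvF
      refine hshed H (mem_link.2 ⟨hvH, mem_complexOf_clutterDual.2 ⟨F, hFV, hcard, hFC, ?_⟩⟩) hH
      exact insert_subset (mem_sdiff.2 ⟨hv, hvF⟩) hHF
    refine ⟨F.erase v, erase_subset_erase v hFV, by rw [card_erase_of_mem hvF, hcard]; rfl,
      fun h => hFC ?_, ?_⟩
    · simpa [insert_erase hvF] using (mem_link.1 h).2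
    · rw [erase_sdiff_eq_sdiff_insert, insert_erase hvF]
      exact hGH.trans hHF
  · rintro ⟨F, hFV, hcard, hFC, hGF⟩
    have hvF : v ∉ F := fun h => (mem_erase.1 (hFV h)).1 rfl
    refine mem_delVert.2 ⟨mem_complexOf_clutterDual.2 ⟨insert v F,
      insert_subset hv (hFV.trans (erase_subset v V)), by rw [card_insert_of_notMem hvF, hcard],
      fun h => hFC (mem_link.2 ⟨hvF, h⟩), ?_⟩, fun h => (mem_erase.1 (mem_sdiff.1 (hGF h)).1).1 rfl⟩
    rwa [← erase_sdiff_eq_sdiff_insert]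

/-- If `F ∉ C`, the face `(V \ F) \ {v}` of the link is not a facet of `Δ − v`; a strictly larger
face `G ⊆ V \ F₂` with `F₂ ∉ C` forces `F₂ = {v} ∪ (F \ {u})` for a vertex `u ∈ G ∩ F`. -/
lemma coneClosed_of_shedding {V : Finset α} {c : ℕ} {C : Finset (Finset α)} {v : α}
    (hv : v ∈ V) (hshed : Shedding (complexOf (clutterDual V c C)) v) : ConeClosed V c C v := by
  intro F hFV hcard hvF hcone
  by_contra hFC
  set W := (V \ F).erase v
  have hvVF : v ∈ V \ F := mem_sdiff.2 ⟨hv, hvF⟩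
  have hWlink : W ∈ link (complexOf (clutterDual V c C)) v :=
    mem_link.2 ⟨notMem_erase v _, by
      rw [insert_erase hvVF]; exact mem_complexOf_clutterDual.2 ⟨F, hFV, hcard, hFC, subset_refl _⟩⟩
  have hWdel : W ∈ delVert (complexOf (clutterDual V c C)) v :=
    mem_delVert.2 ⟨mem_complexOf_clutterDual.2 ⟨F, hFV, hcard, hFC, erase_subset v _⟩,
      notMem_erase v _⟩
  obtain ⟨G, hG, hWG, hWne⟩ : ∃ G ∈ delVert (complexOf (clutterDual V c C)) v, W ⊆ G ∧ W ≠ G := by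
    simpa [facets, hWdel] using hshed W hWlink
  obtain ⟨hGΔ, hvG⟩ := mem_delVert.1 hG
  obtain ⟨F₂, hF₂V, hF₂card, hF₂C, hGF₂⟩ := mem_complexOf_clutterDual.1 hGΔ
  obtain ⟨u, huG, huW⟩ := exists_of_ssubset (hWG.ssubset_of_ne hWne)
  have huF₂ := mem_sdiff.1 (hGF₂ huG)
  have huF : u ∈ F := by
    by_contra huF
    exact huW (mem_erase.2 ⟨fun h => hvG (h ▸ huG), mem_sdiff.2 ⟨huF₂.1, huF⟩⟩)
  have hF₂ : F₂ ⊆ insert v (F.erase u) := by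
    intro x hx
    have hxW : x ∉ W := fun h => (mem_sdiff.1 (hGF₂ (hWG h))).2 hx
    have hxu : x ≠ u := fun h => huF₂.2 (h ▸ hx)
    simp only [W, mem_erase, mem_sdiff, not_and, not_not] at hxW
    simp only [mem_insert, mem_erase]
    by_cases hxv : x = v
    · exact .inl hxv
    · exact .inr ⟨hxu, hxW hxv (hF₂V hx)⟩
  have hcard' : (insert v (F.erase u)).card = c := by
    rw [card_insert_of_notMem (fun h => hvF (mem_of_mem_erase h)), card_erase_of_mem huF, hcard]
    exact Nat.sub_add_cancel (card_pos.2 ⟨u, huF⟩ |>.trans_eq hcard)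
  exact hF₂C (eq_of_subset_of_card_le hF₂ (hcard'.trans hF₂card.symm).le ▸ hcone u huF)

/-- If `⟨C^∨⟩` is vertex decomposable, then the `d`-clutter `C` is chordal. -/
theorem chordal_of_vdecomp_dual (V : Finset α) (d : ℕ) (C : Finset (Finset α))
    (hC : IsClutter V (d + 1) C)
    (h : VDecomp (complexOf (clutterDual V (d + 1) C))) :
    Chordal V (d + 1) C := by
  generalize hΔ : complexOf (clutterDual V (d + 1) C) = Δ at h
  induction h generalizing V d C with
  | simplex hfacets =>
    subst hΔ
    obtain ⟨F₀, hF₀, rfl⟩ := exists_eq_powersetCard_erase hC hfacets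
    exact chordal_powersetCard_erase hF₀
  | shed v hshed _ _ ihlink ihdel =>
    subst hΔ
    by_cases hv : v ∈ V
    · cases d with
      | zero => exact chordal_of_isClutter_one hC
      | succ d =>
        exact chordal_of_link_of_delVert hv hC (coneClosed_of_shedding hv hshed)
          (ihdel _ _ _ (hC.link v) (delVert_complexOf_clutterDual hv hshed).symm)
          (ihlink _ _ _ (hC.delVert v) (link_complexOf_clutterDual hv).symm)
    · exact ihdel V d C hC (delVert_complexOf_clutterDual_of_notMem hv).symm

end ClutterPaper
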